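/- arXiv:1606.07250 — 3 statements merged into one kernel-verified Lean document; each statement's English description precedes it below -/
import Mathlib

section
/- Let ω be a weight on [0,1] satisfying the dyadic reverse doubling condition, and let 1 < p < ∞. Then there exist constants c, c' > 0 such that for every finite family Λ of dyadic intervals, c·(card Λ)^{1/p} ≤ (∫_0^1 (∑_{I∈Λ} ω(I)^{−2/p} χ_I(x))^{p/2} ω(x) dx)^{1/p} ≤ c'·(card Λ)^{1/p}. In particular, the norm of ∑_{I∈Λ} H_I/‖H_I‖_{p,ω} in X^p(ω) is comparable to (card Λ)^{1/p}. -/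
open MeasureTheory Set

noncomputable def dyadicI (n k : ℕ) : Set ℝ := Set.Ico ((k : ℝ) / 2 ^ n) (((k : ℝ) + 1) / 2 ^ n)

def IsDyadic (I : ℕ × ℕ) : Prop := I.2 < 2 ^ I.1

noncomputable def wInt (w : ℝ → ℝ) (I : ℕ × ℕ) : ℝ := ∫ x in dyadicI I.1 I.2, w x

/-- `X^p(ω)`-norm of `∑_{I ∈ Λ} H_I / ‖H_I‖_{p,ω}`, computed via the Littlewood–Paley
square function expression. -/
noncomputable def XnormOne (w : ℝ → ℝ) (p : ℝ) (Λ : Finset (ℕ × ℕ)) : ℝ :=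
  (∫ x in Set.Ico (0 : ℝ) 1,
      (∑ I ∈ Λ, Set.indicator (dyadicI I.1 I.2) (fun _ => (wInt w I) ^ (-(2 / p))) x) ^ (p / 2)
        * w x) ^ (1 / p)

/-! The intervals of `Λ` containing a point `x` form a chain, so by reverse doubling the numbers
`ω(I)⁻¹` over these intervals are `δ`-lacunary: any two of them differ by a factor at least `δ⁻¹`.
Every `ℓ^s` sum of a lacunary family is comparable to its largest term, hence pointwise
`(∑ ω(I)^(-2/p) χ_I)^(p/2)` is comparable to `∑ ω(I)⁻¹ χ_I`, whose integral against `ω` is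
exactly `card Λ`. -/

def IsLacunary {ι : Type*} (q : ℝ) (S : Finset ι) (b : ι → ℝ) : Prop :=
  ∀ i ∈ S, ∀ j ∈ S, i ≠ j → b i ≤ q * b j ∨ b j ≤ q * b i

namespace IsLacunary

variable {ι : Type*} {q : ℝ} {S : Finset ι} {b : ι → ℝ}

theorem mono {T : Finset ι} (h : IsLacunary q S b) (hT : T ⊆ S) : IsLacunary q T b :=
  fun i hi j hj hij => h i (hT hi) j (hT hj) hij

theorem rpow (h : IsLacunary q S b) (hq : 0 ≤ q) (hb : ∀ i ∈ S, 0 ≤ b i) {t : ℝ} (ht : 0 ≤ t) :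
    IsLacunary (q ^ t) S (fun i => b i ^ t) := by
  intro i hi j hj hij
  rcases h i hi j hj hij with hle | hle
  · left
    rw [← Real.mul_rpow hq (hb j hj)]
    exact Real.rpow_le_rpow (hb i hi) hle ht
  · right
    rw [← Real.mul_rpow hq (hb i hi)]
    exact Real.rpow_le_rpow (hb j hj) hle ht

theorem sum_le_div (h : IsLacunary q S b) (hq0 : 0 ≤ q) (hq1 : q < 1) (hb : ∀ i ∈ S, 0 ≤ b i)
    {M : ℝ} (hM0 : 0 ≤ M) (hM : ∀ i ∈ S, b i ≤ M) : ∑ i ∈ S, b i ≤ M / (1 - q) := by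
  classical
  induction S using Finset.induction_on_max_value b generalizing M with
  | empty => simpa using div_nonneg hM0 (by linarith)
  | insert a s has hmax ih =>
    have hba : 0 ≤ b a := hb a (Finset.mem_insert_self a s)
    have hs : ∀ i ∈ s, b i ≤ q * b a := fun i hi => by
      have hia : a ≠ i := fun hai => has (hai ▸ hi)
      rcases h a (Finset.mem_insert_self a s) i (Finset.mem_insert_of_mem hi) hia with hle | hle
      · -- `b a ≤ q * b i ≤ q * b a` forces `b a = 0`
        nlinarith [hmax i hi, hb i (Finset.mem_insert_of_mem hi)]
      · exact hle
    have hsum := ih (h.mono (Finset.subset_insert a s))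
      (fun i hi => hb i (Finset.mem_insert_of_mem hi)) (mul_nonneg hq0 hba) hs
    calc ∑ i ∈ insert a s, b i = b a + ∑ i ∈ s, b i := Finset.sum_insert has
      _ ≤ b a + q * b a / (1 - q) := by gcongr
      _ = b a / (1 - q) := by field_simp [(by linarith : (1 - q) ≠ 0)]; ring
      _ ≤ M / (1 - q) := by
        gcongr
        exact hM a (Finset.mem_insert_self a s)

theorem rpow_sum_rpow_le (h : IsLacunary q S b) (hq0 : 0 ≤ q) (hq1 : q < 1)
    (hb : ∀ i ∈ S, 0 ≤ b i) {s : ℝ} (hs : 0 < s) :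
    (∑ i ∈ S, b i ^ s) ^ s⁻¹ ≤ (1 - q ^ s)⁻¹ ^ s⁻¹ * ∑ i ∈ S, b i := by
  rcases S.eq_empty_or_nonempty with rfl | hS
  · simp [Real.zero_rpow (inv_ne_zero hs.ne')]
  obtain ⟨i₀, hi₀, hmax⟩ := S.exists_max_image b hS
  have hqs : q ^ s < 1 := Real.rpow_lt_one hq0 hq1 hs
  have hbs : ∀ i ∈ S, 0 ≤ b i ^ s := fun i hi => Real.rpow_nonneg (hb i hi) s
  have hsum : ∑ i ∈ S, b i ^ s ≤ b i₀ ^ s / (1 - q ^ s) :=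
    (h.rpow hq0 hb hs.le).sum_le_div (Real.rpow_nonneg hq0 s) hqs hbs (hbs i₀ hi₀)
      fun i hi => Real.rpow_le_rpow (hb i hi) (hmax i hi) hs.le
  calc (∑ i ∈ S, b i ^ s) ^ s⁻¹ ≤ (b i₀ ^ s / (1 - q ^ s)) ^ s⁻¹ :=
        Real.rpow_le_rpow (Finset.sum_nonneg hbs) hsum (inv_nonneg.2 hs.le)
    _ = (1 - q ^ s)⁻¹ ^ s⁻¹ * b i₀ := by
        rw [div_eq_mul_inv, Real.mul_rpow (hbs i₀ hi₀) (inv_nonneg.2 (by linarith)),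
          Real.rpow_rpow_inv (hb i₀ hi₀) hs.ne', mul_comm]
    _ ≤ (1 - q ^ s)⁻¹ ^ s⁻¹ * ∑ i ∈ S, b i :=
        mul_le_mul_of_nonneg_left (Finset.single_le_sum hb hi₀)
          (Real.rpow_nonneg (inv_nonneg.2 (by linarith)) _)

theorem sum_le_rpow_sum_rpow (h : IsLacunary q S b) (hq0 : 0 ≤ q) (hq1 : q < 1)
    (hb : ∀ i ∈ S, 0 ≤ b i) {s : ℝ} (hs : 0 < s) :
    ∑ i ∈ S, b i ≤ (1 - q)⁻¹ * (∑ i ∈ S, b i ^ s) ^ s⁻¹ := by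
  rcases S.eq_empty_or_nonempty with rfl | hS
  · simp [Real.zero_rpow (inv_ne_zero hs.ne')]
  obtain ⟨i₀, hi₀, hmax⟩ := S.exists_max_image b hS
  calc ∑ i ∈ S, b i ≤ b i₀ / (1 - q) := h.sum_le_div hq0 hq1 hb (hb i₀ hi₀) hmax
    _ = (1 - q)⁻¹ * (b i₀ ^ s) ^ s⁻¹ := by
        rw [Real.rpow_rpow_inv (hb i₀ hi₀) hs.ne', div_eq_inv_mul]
    _ ≤ (1 - q)⁻¹ * (∑ i ∈ S, b i ^ s) ^ s⁻¹ := by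
        gcongr
        · exact Real.rpow_nonneg (hb i₀ hi₀) s
        · exact Finset.single_le_sum (fun i hi => Real.rpow_nonneg (hb i hi) s) hi₀

end IsLacunary

theorem mem_dyadicI_iff {n k : ℕ} {x : ℝ} : x ∈ dyadicI n k ↔ 0 ≤ x ∧ ⌊x * 2 ^ n⌋₊ = k := by
  have h2n : (0 : ℝ) < 2 ^ n := by positivity
  rw [dyadicI, mem_Ico, div_le_iff₀ h2n, lt_div_iff₀ h2n]
  constructor
  · rintro ⟨hlo, hhi⟩
    have hx : 0 ≤ x * 2 ^ n := le_trans (Nat.cast_nonneg k) hlo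
    exact ⟨nonneg_of_mul_nonneg_left hx h2n, (Nat.floor_eq_iff hx).2 ⟨hlo, hhi⟩⟩
  · rintro ⟨hx, rfl⟩
    exact (Nat.floor_eq_iff (by positivity)).1 rfl

theorem measurableSet_dyadicI (n k : ℕ) : MeasurableSet (dyadicI n k) := measurableSet_Ico

theorem dyadicI_subset_Ico {I : ℕ × ℕ} (hI : IsDyadic I) : dyadicI I.1 I.2 ⊆ Ico 0 1 := by
  have hk : (I.2 : ℝ) + 1 ≤ 2 ^ I.1 := by exact_mod_cast hI
  exact Ico_subset_Ico (by positivity) ((div_le_one (by positivity)).2 hk)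

theorem floor_mul_two_pow_of_le (x : ℝ) {m n : ℕ} (hmn : m ≤ n) :
    ⌊x * 2 ^ m⌋₊ = ⌊x * 2 ^ n⌋₊ / 2 ^ (n - m) := by
  have hpow : (2 : ℝ) ^ n = 2 ^ m * 2 ^ (n - m) := by rw [← pow_add, Nat.add_sub_cancel' hmn]
  rw [← Nat.floor_div_natCast, Nat.cast_pow, Nat.cast_ofNat, hpow, ← mul_assoc,
    mul_div_cancel_right₀ _ (by positivity)]

theorem dyadicI_subset_of_le {m n j k : ℕ} (hmn : m ≤ n) {x : ℝ} (hx : x ∈ dyadicI n k)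
    (hx' : x ∈ dyadicI m j) : dyadicI n k ⊆ dyadicI m j := by
  rw [mem_dyadicI_iff] at hx hx'
  intro y hy
  rw [mem_dyadicI_iff] at hy ⊢
  refine ⟨hy.1, ?_⟩
  rw [← hx'.2, floor_mul_two_pow_of_le y hmn, floor_mul_two_pow_of_le x hmn, hy.2, hx.2]

theorem dyadicI_ne_of_lt {m n j k : ℕ} (hmn : m < n) : dyadicI n k ≠ dyadicI m j := by
  intro heq
  rw [dyadicI, dyadicI, Ico_eq_Ico_iff (Or.inl (div_lt_div_of_pos_right (lt_add_one _)
    (by positivity)))] at heq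
  have hlen : ((k : ℝ) + 1) / 2 ^ n - k / 2 ^ n = ((j : ℝ) + 1) / 2 ^ m - j / 2 ^ m := by
    rw [heq.1, heq.2]
  simp only [← sub_div, add_sub_cancel_left, one_div] at hlen
  exact (pow_lt_pow_right₀ (by norm_num : (1 : ℝ) < 2) hmn).ne'
    (inv_injective hlen)

theorem dyadicI_ssubset_or_ssubset {I J : ℕ × ℕ} {x : ℝ} (hI : x ∈ dyadicI I.1 I.2)
    (hJ : x ∈ dyadicI J.1 J.2) (hIJ : I ≠ J) :
    dyadicI I.1 I.2 ⊂ dyadicI J.1 J.2 ∨ dyadicI J.1 J.2 ⊂ dyadicI I.1 I.2 := by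
  rcases lt_trichotomy I.1 J.1 with hlt | heq | hgt
  · exact Or.inr ((dyadicI_subset_of_le hlt.le hJ hI).ssubset_of_ne (dyadicI_ne_of_lt hlt))
  · refine absurd (Prod.ext heq ?_) hIJ
    rw [mem_dyadicI_iff] at hI hJ
    rw [← hI.2, ← hJ.2, heq]
  · exact Or.inl ((dyadicI_subset_of_le hgt.le hI hJ).ssubset_of_ne (dyadicI_ne_of_lt hgt))

def IsReverseDoubling (w : ℝ → ℝ) (δ : ℝ) : Prop :=
  ∀ I J, IsDyadic I → IsDyadic J → dyadicI I.1 I.2 ⊂ dyadicI J.1 J.2 → wInt w I ≤ δ * wInt w J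

theorem isLacunary_inv_wInt {w : ℝ → ℝ} {δ : ℝ} (hpos : ∀ I, IsDyadic I → 0 < wInt w I)
    (hrd : IsReverseDoubling w δ) {S : Finset (ℕ × ℕ)} {x : ℝ}
    (hS : ∀ I ∈ S, IsDyadic I ∧ x ∈ dyadicI I.1 I.2) :
    IsLacunary δ S fun I => (wInt w I)⁻¹ := by
  have inv_le {I J : ℕ × ℕ} (hI : IsDyadic I) (hJ : IsDyadic J)
      (hIJ : dyadicI I.1 I.2 ⊂ dyadicI J.1 J.2) : (wInt w J)⁻¹ ≤ δ * (wInt w I)⁻¹ := by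
    rw [← div_eq_mul_inv, le_div_iff₀ (hpos I hI), inv_mul_le_iff₀ (hpos J hJ), mul_comm]
    exact hrd I J hI hJ hIJ
  intro I hI J hJ hIJ
  rcases dyadicI_ssubset_or_ssubset (hS I hI).2 (hS J hJ).2 hIJ with h | h
  · exact Or.inr (inv_le (hS I hI).1 (hS J hJ).1 h)
  · exact Or.inl (inv_le (hS J hJ).1 (hS I hI).1 h)

noncomputable def dyadicSum (Λ : Finset (ℕ × ℕ)) (c : ℕ × ℕ → ℝ) (x : ℝ) : ℝ :=
  ∑ I ∈ Λ, indicator (dyadicI I.1 I.2) (fun _ => c I) x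

theorem measurable_dyadicSum (Λ : Finset (ℕ × ℕ)) (c : ℕ × ℕ → ℝ) : Measurable (dyadicSum Λ c) :=
  Finset.measurable_fun_sum Λ fun _ _ => measurable_const.indicator (measurableSet_dyadicI _ _)

theorem dyadicSum_nonneg {Λ : Finset (ℕ × ℕ)} {c : ℕ × ℕ → ℝ} (hc : ∀ I ∈ Λ, 0 ≤ c I) (x : ℝ) :
    0 ≤ dyadicSum Λ c x :=
  Finset.sum_nonneg fun I hI => indicator_nonneg (fun _ _ => hc I hI) x

theorem dyadicSum_mul (Λ : Finset (ℕ × ℕ)) (c : ℕ × ℕ → ℝ) (w : ℝ → ℝ) (x : ℝ) :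
    dyadicSum Λ c x * w x = ∑ I ∈ Λ, indicator (dyadicI I.1 I.2) (fun y => c I * w y) x := by
  rw [dyadicSum, Finset.sum_mul]
  exact Finset.sum_congr rfl fun I _ => (indicator_mul_left _ _ _).symm

section Pointwise

variable {w : ℝ → ℝ} {δ : ℝ} {Λ : Finset (ℕ × ℕ)}

open Classical in
theorem dyadicSum_eq_sum_filter (c : ℕ × ℕ → ℝ) (x : ℝ) :
    dyadicSum Λ c x = ∑ I ∈ {I ∈ Λ | x ∈ dyadicI I.1 I.2}, c I :=
  Finset.sum_indicator_eq_sum_filter Λ (fun I _ => c I) (fun I => dyadicI I.1 I.2) (fun _ => x)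

theorem dyadicSum_rpow_neg_wInt (hpos : ∀ I, IsDyadic I → 0 < wInt w I)
    (hΛ : ∀ I ∈ Λ, IsDyadic I) (t x : ℝ) :
    dyadicSum Λ (fun I => wInt w I ^ (-t)) x = dyadicSum Λ (fun I => (wInt w I)⁻¹ ^ t) x := by
  refine Finset.sum_congr rfl fun I hI => ?_
  dsimp only
  rw [Real.inv_rpow (hpos I (hΛ I hI)).le, Real.rpow_neg (hpos I (hΛ I hI)).le]

open Classical in
theorem isLacunary_inv_wInt_filter (hpos : ∀ I, IsDyadic I → 0 < wInt w I)
    (hrd : IsReverseDoubling w δ) (hΛ : ∀ I ∈ Λ, IsDyadic I) (x : ℝ) :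
    IsLacunary δ {I ∈ Λ | x ∈ dyadicI I.1 I.2} fun I => (wInt w I)⁻¹ :=
  isLacunary_inv_wInt hpos hrd fun I hI => by
    rw [Finset.mem_filter] at hI
    exact ⟨hΛ I hI.1, hI.2⟩

theorem dyadicSum_rpow_le (hδ0 : 0 ≤ δ) (hδ1 : δ < 1) {p : ℝ} (hp : 0 < p)
    (hpos : ∀ I, IsDyadic I → 0 < wInt w I) (hrd : IsReverseDoubling w δ)
    (hΛ : ∀ I ∈ Λ, IsDyadic I) (x : ℝ) :
    dyadicSum Λ (fun I => wInt w I ^ (-(2 / p))) x ^ (p / 2)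
      ≤ (1 - δ ^ (2 / p))⁻¹ ^ (p / 2) * dyadicSum Λ (fun I => (wInt w I)⁻¹) x := by
  classical
  have h := (isLacunary_inv_wInt_filter hpos hrd hΛ x).rpow_sum_rpow_le hδ0 hδ1
    (fun I hI => (inv_pos.2 (hpos I (hΛ I (Finset.mem_filter.1 hI).1))).le) (div_pos two_pos hp)
  rwa [inv_div, ← dyadicSum_eq_sum_filter, ← dyadicSum_eq_sum_filter,
    ← dyadicSum_rpow_neg_wInt hpos hΛ] at h

theorem dyadicSum_le_rpow (hδ0 : 0 ≤ δ) (hδ1 : δ < 1) {p : ℝ} (hp : 0 < p)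
    (hpos : ∀ I, IsDyadic I → 0 < wInt w I) (hrd : IsReverseDoubling w δ)
    (hΛ : ∀ I ∈ Λ, IsDyadic I) (x : ℝ) :
    dyadicSum Λ (fun I => (wInt w I)⁻¹) x
      ≤ (1 - δ)⁻¹ * dyadicSum Λ (fun I => wInt w I ^ (-(2 / p))) x ^ (p / 2) := by
  classical
  have h := (isLacunary_inv_wInt_filter hpos hrd hΛ x).sum_le_rpow_sum_rpow hδ0 hδ1
    (fun I hI => (inv_pos.2 (hpos I (hΛ I (Finset.mem_filter.1 hI).1))).le) (div_pos two_pos hp)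
  rwa [inv_div, ← dyadicSum_eq_sum_filter, ← dyadicSum_eq_sum_filter,
    ← dyadicSum_rpow_neg_wInt hpos hΛ] at h

end Pointwise

theorem integral_mem_Icc_of_mul_le_of_le_mul {α : Type*} [MeasurableSpace α] {μ : Measure α}
    {f g : α → ℝ} {a b : ℝ} (hg : Integrable g μ) (hf : AEStronglyMeasurable f μ)
    (hf0 : ∀ x, 0 ≤ f x) (hlo : ∀ x, a * g x ≤ f x) (hhi : ∀ x, f x ≤ b * g x) :
    ∫ x, f x ∂μ ∈ Icc (a * ∫ x, g x ∂μ) (b * ∫ x, g x ∂μ) := by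
  have hfi : Integrable f μ := (hg.const_mul b).mono' hf
    (ae_of_all _ fun x => (Real.norm_of_nonneg (hf0 x)).trans_le (hhi x))
  rw [← integral_const_mul, ← integral_const_mul]
  exact ⟨integral_mono (hg.const_mul a) hfi hlo, integral_mono hfi (hg.const_mul b) hhi⟩

theorem dyadicI_zero_zero : dyadicI 0 0 = Ico 0 1 := by
  simp [dyadicI]

theorem integrableOn_of_wInt_pos {w : ℝ → ℝ} {I : ℕ × ℕ} (h : 0 < wInt w I) :
    IntegrableOn w (dyadicI I.1 I.2) :=
  Integrable.of_integral_ne_zero h.ne'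

section Integral

variable {w : ℝ → ℝ} {Λ : Finset (ℕ × ℕ)}

theorem integrable_indicator_mul_const (hpos : ∀ I, IsDyadic I → 0 < wInt w I) {I : ℕ × ℕ}
    (hI : IsDyadic I) (c : ℝ) :
    Integrable (indicator (dyadicI I.1 I.2) fun y => c * w y) :=
  IntegrableOn.integrable_indicator ((integrableOn_of_wInt_pos (hpos I hI)).const_mul c)
    (measurableSet_dyadicI I.1 I.2)

theorem integrable_dyadicSum_mul (hpos : ∀ I, IsDyadic I → 0 < wInt w I)
    (hΛ : ∀ I ∈ Λ, IsDyadic I) (c : ℕ × ℕ → ℝ) :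
    Integrable fun x => dyadicSum Λ c x * w x := by
  simp_rw [dyadicSum_mul]
  exact integrable_finsetSum Λ fun I hI => integrable_indicator_mul_const hpos (hΛ I hI) (c I)

theorem integral_dyadicSum_inv_wInt_mul (hpos : ∀ I, IsDyadic I → 0 < wInt w I)
    (hΛ : ∀ I ∈ Λ, IsDyadic I) :
    ∫ x in Ico (0 : ℝ) 1, dyadicSum Λ (fun I => (wInt w I)⁻¹) x * w x = Λ.card := by
  have hterm : ∀ I ∈ Λ,
      ∫ x in Ico (0 : ℝ) 1, indicator (dyadicI I.1 I.2) (fun y => (wInt w I)⁻¹ * w y) x = 1 := by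
    intro I hI
    rw [setIntegral_indicator (measurableSet_dyadicI I.1 I.2),
      inter_eq_right.2 (dyadicI_subset_Ico (hΛ I hI)), integral_const_mul]
    exact inv_mul_cancel₀ (hpos I (hΛ I hI)).ne'
  simp_rw [dyadicSum_mul]
  rw [integral_finsetSum Λ fun I hI =>
    (integrable_indicator_mul_const hpos (hΛ I hI) _).integrableOn]
  simp [Finset.sum_congr rfl hterm]

end Integral

theorem integral_dyadicSum_rpow_mul_mem_Icc {w : ℝ → ℝ} {δ p : ℝ} (hδ0 : 0 ≤ δ) (hδ1 : δ < 1)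
    (hp : 0 < p) (hw : ∀ x, 0 ≤ w x) (hpos : ∀ I, IsDyadic I → 0 < wInt w I)
    (hrd : IsReverseDoubling w δ) {Λ : Finset (ℕ × ℕ)} (hΛ : ∀ I ∈ Λ, IsDyadic I) :
    ∫ x in Ico (0 : ℝ) 1, dyadicSum Λ (fun I => wInt w I ^ (-(2 / p))) x ^ (p / 2) * w x ∈
      Icc ((1 - δ) * Λ.card) ((1 - δ ^ (2 / p))⁻¹ ^ (p / 2) * Λ.card) := by
  have hw01 : IntegrableOn w (Ico 0 1) := by
    simpa [dyadicI_zero_zero] using integrableOn_of_wInt_pos (hpos (0, 0) Nat.one_pos)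
  rw [← integral_dyadicSum_inv_wInt_mul hpos hΛ]
  refine integral_mem_Icc_of_mul_le_of_le_mul (integrable_dyadicSum_mul hpos hΛ _).integrableOn
    ((((measurable_dyadicSum Λ _).pow_const _).aestronglyMeasurable).mul hw01.1)
    (fun x => mul_nonneg (Real.rpow_nonneg (dyadicSum_nonneg
      (fun I hI => Real.rpow_nonneg (hpos I (hΛ I hI)).le _) x) _) (hw x))
    (fun x => ?_) (fun x => ?_)
  · have h := dyadicSum_le_rpow hδ0 hδ1 hp hpos hrd hΛ x
    rw [← mul_assoc]
    exact mul_le_mul_of_nonneg_right ((le_inv_mul_iff₀ (sub_pos.2 hδ1)).1 h) (hw x)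
  · rw [← mul_assoc]
    exact mul_le_mul_of_nonneg_right (dyadicSum_rpow_le hδ0 hδ1 hp hpos hrd hΛ x) (hw x)

theorem stmt3 (w : ℝ → ℝ) (δ p : ℝ) (hδ0 : 0 < δ) (hδ1 : δ < 1) (hp : 1 < p)
    (hw : ∀ x, 0 ≤ w x) (hpos : ∀ I, IsDyadic I → 0 < wInt w I)
    (hrd : ∀ I J, IsDyadic I → IsDyadic J →
      dyadicI I.1 I.2 ⊂ dyadicI J.1 J.2 → wInt w I ≤ δ * wInt w J) :
    ∃ c > (0 : ℝ), ∃ c' > (0 : ℝ), ∀ Λ : Finset (ℕ × ℕ), (∀ I ∈ Λ, IsDyadic I) →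
      c * (Λ.card : ℝ) ^ (1 / p) ≤ XnormOne w p Λ ∧
      XnormOne w p Λ ≤ c' * (Λ.card : ℝ) ^ (1 / p) := by
  have hp0 : 0 < p := one_pos.trans hp
  have hδ' : 0 < 1 - δ := sub_pos.2 hδ1
  set C := (1 - δ ^ (2 / p))⁻¹ ^ (p / 2)
  have hC : 0 < C := Real.rpow_pos_of_pos
    (inv_pos.2 (sub_pos.2 (Real.rpow_lt_one hδ0.le hδ1 (by positivity)))) _
  refine ⟨(1 - δ) ^ (1 / p), Real.rpow_pos_of_pos hδ' _, C ^ (1 / p), Real.rpow_pos_of_pos hC _,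
    fun Λ hΛ => ?_⟩
  obtain ⟨hlo, hhi⟩ := integral_dyadicSum_rpow_mul_mem_Icc hδ0.le hδ1 hp0 hw hpos hrd hΛ
  have hcard : (0 : ℝ) ≤ Λ.card := Nat.cast_nonneg _
  rw [← Real.mul_rpow hδ'.le hcard, ← Real.mul_rpow hC.le hcard]
  -- `XnormOne w p Λ` unfolds to the `1 / p`-th power of the integral bounded above
  exact ⟨Real.rpow_le_rpow (by positivity) hlo (by positivity),
    Real.rpow_le_rpow ((mul_nonneg hδ'.le hcard).trans hlo) hhi (by positivity)⟩
end

section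
/- Let X be a Banach space with normalized Schauder basis ℬ and let ω = (ωₙ) be a weight sequence of positive reals. If ℬ is (s,ω)-greedy for polynomials with constant coefficients for some 0 < s ≤ 1 (i.e., there is D(s) > 0 with ‖x − Gˢ(x)‖ ≤ D(s)·𝒟^ω_{ω(A)}(x) for every x, every s-greedy set A of x, and Gˢ(x) = P_A(x)), then ℬ is (t,ω)-greedy for every 0 < t ≤ 1: there is C(t) > 0 such that ‖x − Gᵗ(x)‖ ≤ C(t)·σ^ω_{ω(A)}(x) for every x ∈ X, every t-greedy set A of x, and Gᵗ(x) = P_A(x). Moreover, for t ≥ s one may take C(t) = D(s)², and for t < s one may take C(t) = (2 + ((t+s)/t)·D(s))·D(s). -/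
/-!
Let `u = sup_{n ∉ A} |e*ₙ(x)|`, so that `|e*ₐ(x)| ≥ t u` on `A`, and fix `λ ≥ 1` with `s ≤ λ t`.
Put `R = (x - P_{A∪B} x) + λ P_{A∖B} x`. For every choice of signs `η` on `B ∖ A`, adding
`u 1_{η'B}` to `R` (with `η' = 1` on `A ∩ B`) gives a vector of which `A` is an `s`-greedy set, so
the PCCG property yields `‖x - P_{A∪B} x + u 1_{η(B∖A)}‖ ≤ D ‖R‖`. As the coefficients of `x` on
`B ∖ A` have modulus at most `u`, `x - P_A x` is a convex combination of these vectors, whence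
`‖x - P_A x‖ ≤ D ‖R‖`.

The PCCG property applied to `y + α 1_G` with `α` large shows `‖y - P_G y‖ ≤ D ‖y‖`, and then, by
letting the complement of `G` grow to `ℕ`, `‖P_G y‖ ≤ D ‖y‖`. If `z` is supported on `B` and
`p = x - z`, then `R = (p - P_B p) + (λ - 1) P_{A∖B} p`, so `‖R‖ ≤ λ D ‖p‖` and
`‖x - P_A x‖ ≤ λ D² ‖x - z‖`. Taking `λ = 1` when `s ≤ t` and `λ = s / t` otherwise gives
constants no larger than the stated ones.
-/

open Finset Filter Topology

section Convexity

variable {X : Type*} [NormedAddCommGroup X] [NormedSpace ℝ X]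

theorem convexOn_norm_add_smul (y v : X) : ConvexOn ℝ Set.univ fun w : ℝ => ‖y + w • v‖ := by
  refine ⟨convex_univ, fun w _ w' _ a b ha hb hab => ?_⟩
  calc ‖y + (a • w + b • w') • v‖ = ‖a • (y + w • v) + b • (y + w' • v)‖ := by
        rw [show a • (y + w • v) + b • (y + w' • v) = (a + b) • y + (a • w + b • w') • v by
          module, hab, one_smul]
    _ ≤ a • ‖y + w • v‖ + b • ‖y + w' • v‖ := by
        refine (norm_add_le _ _).trans_eq ?_
        rw [norm_smul, norm_smul, Real.norm_of_nonneg ha, Real.norm_of_nonneg hb, smul_eq_mul,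
          smul_eq_mul]

theorem norm_add_sum_le_of_forall_signs {ι : Type*} (v : ι → X) (u C : ℝ) (Γ : Finset ι) :
    ∀ (y : X) (f : ι → ℝ), (∀ i ∈ Γ, |f i| ≤ u) →
      (∀ η : ι → ℝ, (∀ i ∈ Γ, η i = 1 ∨ η i = -1) → ‖y + u • ∑ i ∈ Γ, η i • v i‖ ≤ C) →
      ‖y + ∑ i ∈ Γ, f i • v i‖ ≤ C := by
  classical
  induction Γ using Finset.induction_on with
  | empty => intro y f _ hC; simpa using hC 0 (by simp)
  | insert a Γ ha ih =>
    intro y f hf hC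
    have hvertex (σ : ℝ) (hσ : σ = 1 ∨ σ = -1) :
        ‖(y + ∑ i ∈ Γ, f i • v i) + (u * σ) • v a‖ ≤ C := by
      rw [add_right_comm]
      refine ih _ f (fun i hi => hf i (mem_insert_of_mem hi)) fun η hη => ?_
      have hsigns : ∀ i ∈ insert a Γ,
          Function.update η a σ i = 1 ∨ Function.update η a σ i = -1 := by
        intro i hi
        rcases eq_or_ne i a with rfl | hia
        · simpa using hσ
        · simpa [hia] using hη i ((mem_insert.mp hi).resolve_left hia)
      have := hC _ hsigns
      rw [sum_insert ha, Function.update_self,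
        sum_congr rfl fun i hi => by rw [Function.update_of_ne (ne_of_mem_of_not_mem hi ha)]]
        at this
      convert this using 2
      module
    have hfa : f a ∈ segment ℝ (u * 1) (u * -1) := by
      rw [segment_eq_uIcc, Set.mem_uIcc]
      have := abs_le.mp (hf a (mem_insert_self a Γ))
      right; constructor <;> linarith
    have := (convexOn_norm_add_smul (y + ∑ i ∈ Γ, f i • v i) (v a)).le_on_segment
      (Set.mem_univ _) (Set.mem_univ _) hfa
    rw [sum_insert ha, add_left_comm, add_comm]
    exact this.trans (max_le (hvertex 1 (.inl rfl)) (hvertex (-1) (.inr rfl)))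

end Convexity

section SchauderBasis

variable {X : Type*} [NormedAddCommGroup X] [NormedSpace ℝ X] {e : ℕ → X}
  {e' : ℕ → X →L[ℝ] ℝ}

def IsGreedySet (e' : ℕ → X →L[ℝ] ℝ) (t : ℝ) (x : X) (A : Finset ℕ) : Prop :=
  ∀ a ∈ A, ∀ b ∉ A, t * |e' b x| ≤ |e' a x|

/-- Greedy for polynomials with constant coefficients: the competitors are `α • 1_{ηB}`. -/
def IsPCCGreedy (e : ℕ → X) (e' : ℕ → X →L[ℝ] ℝ) (ω : ℕ → ℝ) (s D : ℝ) : Prop :=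
  ∀ (x : X) (A : Finset ℕ), IsGreedySet e' s x A →
    ∀ (α : ℝ) (B : Finset ℕ) (η : ℕ → ℝ),
      (∑ n ∈ B, ω n) ≤ (∑ n ∈ A, ω n) → (∀ n ∈ B, η n = 1 ∨ η n = -1) →
      ‖x - ∑ n ∈ A, e' n x • e n‖ ≤ D * ‖x - α • ∑ n ∈ B, η n • e n‖

theorem coord_sum (hbi : ∀ n m, e' n (e m) = if n = m then 1 else 0) (F : Finset ℕ)
    (c : ℕ → ℝ) (k : ℕ) : e' k (∑ n ∈ F, c n • e n) = if k ∈ F then c k else 0 := by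
  simp [hbi]

theorem eq_of_forall_coord_eq
    (hbasis : ∀ x : X, Tendsto (fun N => ∑ n ∈ range N, e' n x • e n) atTop (𝓝 x))
    {x y : X} (h : ∀ n, e' n x = e' n y) : x = y :=
  tendsto_nhds_unique (hbasis x) (by simpa only [h] using hbasis y)

theorem tendsto_abs_coord_atTop_zero (hnorm : ∀ n, ‖e n‖ = 1)
    (hbasis : ∀ x : X, Tendsto (fun N => ∑ n ∈ range N, e' n x • e n) atTop (𝓝 x)) (x : X) :
    Tendsto (fun n => |e' n x|) atTop (𝓝 0) := by
  have := (((hbasis x).comp (tendsto_add_atTop_nat 1)).sub (hbasis x)).norm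
  simpa [sum_range_succ, norm_smul, hnorm] using this

theorem IsGreedySet.exists_threshold (hnorm : ∀ n, ‖e n‖ = 1)
    (hbasis : ∀ x : X, Tendsto (fun N => ∑ n ∈ range N, e' n x • e n) atTop (𝓝 x))
    {t : ℝ} (ht : 0 < t) {x : X} {A : Finset ℕ} (hA : IsGreedySet e' t x A) :
    ∃ u, 0 ≤ u ∧ (∀ b ∉ A, |e' b x| ≤ u) ∧ ∀ a ∈ A, t * u ≤ |e' a x| := by
  obtain ⟨b₀, hb₀⟩ := A.exists_notMem
  have hbdd : BddAbove (Set.range fun n => |e' n x|) :=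
    (tendsto_abs_coord_atTop_zero hnorm hbasis x).bddAbove_range
  have hle : ∀ b ∉ A, |e' b x| ≤ ⨆ b : {b // b ∉ A}, |e' b x| := fun b hb =>
    le_ciSup (f := fun b : {b // b ∉ A} => |e' b x|)
      (hbdd.mono (by rintro _ ⟨b, rfl⟩; exact ⟨b, rfl⟩)) ⟨b, hb⟩
  refine ⟨_, (abs_nonneg _).trans (hle b₀ hb₀), hle, fun a ha => ?_⟩
  have : Nonempty {b // b ∉ A} := ⟨⟨b₀, hb₀⟩⟩
  rw [← le_div_iff₀' ht]
  exact ciSup_le fun b => (le_div_iff₀' ht).mpr (hA a ha b b.2)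

namespace IsPCCGreedy

variable {ω : ℕ → ℝ} {s D : ℝ}

theorem norm_sub_coordSum_le (hyp : IsPCCGreedy e e' ω s D) (hnorm : ∀ n, ‖e n‖ = 1)
    (hbi : ∀ n m, e' n (e m) = if n = m then 1 else 0)
    (hbasis : ∀ x : X, Tendsto (fun N => ∑ n ∈ range N, e' n x • e n) atTop (𝓝 x))
    (hs : 0 ≤ s) (y : X) (G : Finset ℕ) :
    ‖y - ∑ n ∈ G, e' n y • e n‖ ≤ D * ‖y‖ := by
  obtain ⟨M, hM⟩ := (tendsto_abs_coord_atTop_zero hnorm hbasis y).bddAbove_range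
  have hM' : ∀ n, |e' n y| ≤ M := fun n => hM ⟨n, rfl⟩
  set α := M + s * M
  set v := y + α • ∑ n ∈ G, (1 : ℝ) • e n
  have hcoord : ∀ k, e' k v = e' k y + if k ∈ G then α else 0 := by simp [v, hbi]
  have hgreedy : IsGreedySet e' s v G := by
    intro a ha b hb
    rw [hcoord, hcoord, if_pos ha, if_neg hb, add_zero]
    have := abs_le.mp (hM' a)
    calc s * |e' b y| ≤ s * M := mul_le_mul_of_nonneg_left (hM' b) hs
      _ ≤ e' a y + α := by linarith
      _ ≤ |e' a y + α| := le_abs_self _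
  have := hyp v G hgreedy α G (fun _ => 1) le_rfl fun _ _ => .inl rfl
  rwa [show v - ∑ n ∈ G, e' n v • e n = y - ∑ n ∈ G, e' n y • e n from
    eq_of_forall_coord_eq hbasis fun k => by by_cases hk : k ∈ G <;> simp [hcoord, hbi, hk],
    add_sub_cancel_right] at this

theorem norm_coordSum_le (hyp : IsPCCGreedy e e' ω s D) (hnorm : ∀ n, ‖e n‖ = 1)
    (hbi : ∀ n m, e' n (e m) = if n = m then 1 else 0)
    (hbasis : ∀ x : X, Tendsto (fun N => ∑ n ∈ range N, e' n x • e n) atTop (𝓝 x))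
    (hs : 0 ≤ s) (y : X) (S : Finset ℕ) :
    ‖∑ n ∈ S, e' n y • e n‖ ≤ D * ‖y‖ := by
  have hlim : Tendsto (fun N => y - ∑ n ∈ range N \ S, e' n y • e n) atTop
      (𝓝 (∑ n ∈ S, e' n y • e n)) := by
    obtain ⟨N₀, hN₀⟩ := S.exists_nat_subset_range
    have := ((tendsto_const_nhds (x := y)).sub (hbasis y)).add_const (∑ n ∈ S, e' n y • e n)
    rw [sub_self, zero_add] at this
    refine this.congr' ((eventually_ge_atTop N₀).mono fun N hN => ?_)
    dsimp only
    rw [sum_sdiff_eq_sub (hN₀.trans (range_subset_range.mpr hN))]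
    abel
  exact le_of_tendsto' hlim.norm fun N => hyp.norm_sub_coordSum_le hnorm hbi hbasis hs y _

theorem norm_sub_coordSum_le_of_threshold (hyp : IsPCCGreedy e e' ω s D)
    (hbi : ∀ n m, e' n (e m) = if n = m then 1 else 0)
    (hbasis : ∀ x : X, Tendsto (fun N => ∑ n ∈ range N, e' n x • e n) atTop (𝓝 x))
    (hs0 : 0 ≤ s) (hs1 : s ≤ 1) {x : X} {A B : Finset ℕ} (hω : ∑ n ∈ B, ω n ≤ ∑ n ∈ A, ω n)
    {u l : ℝ} (hu : 0 ≤ u) (hout : ∀ b ∉ A, |e' b x| ≤ u)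
    (hin : ∀ a ∈ A, s * u ≤ l * |e' a x|) :
    ‖x - ∑ n ∈ A, e' n x • e n‖ ≤
      D * ‖x - ∑ n ∈ A ∪ B, e' n x • e n + l • ∑ n ∈ A \ B, e' n x • e n‖ := by
  classical
  rw [show x - ∑ n ∈ A, e' n x • e n
      = x - ∑ n ∈ A ∪ B, e' n x • e n + ∑ n ∈ B \ A, e' n x • e n from
    eq_of_forall_coord_eq hbasis fun k => by
      by_cases hA : k ∈ A <;> by_cases hB : k ∈ B <;> simp [hbi, hA, hB]]
  refine norm_add_sum_le_of_forall_signs e u _ (B \ A) _ _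
    (fun n hn => hout n (mem_sdiff.mp hn).2) fun η hη => ?_
  set η' := fun n => if n ∈ A then 1 else η n
  set v := x - ∑ n ∈ A ∪ B, e' n x • e n + l • ∑ n ∈ A \ B, e' n x • e n
    + u • ∑ n ∈ B, η' n • e n
  have hcoord : ∀ k, e' k v =
      if k ∈ B then u * η' k else if k ∈ A then l * e' k x else e' k x := fun k => by
    by_cases hA : k ∈ A <;> by_cases hB : k ∈ B <;> simp [v, hbi, hA, hB]
  have hη' : ∀ n ∈ B, η' n = 1 ∨ η' n = -1 := fun n hn => by
    by_cases hA : n ∈ A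
    · simp [η', hA]
    · simpa [η', hA] using hη n (mem_sdiff.mpr ⟨hn, hA⟩)
  have hgreedy : IsGreedySet e' s v A := by
    intro a ha b hb
    have hvb : |e' b v| ≤ u := by
      rw [hcoord]
      split_ifs with hB
      · rcases hη' b hB with h | h <;> simp [h, abs_of_nonneg hu]
      · exact hout b hb
    have hva : s * u ≤ |e' a v| := by
      rw [hcoord]
      split_ifs with hB
      · simpa [η', ha, abs_of_nonneg hu] using mul_le_of_le_one_left hu hs1
      · rw [abs_mul]
        exact (hin a ha).trans (mul_le_mul_of_nonneg_right (le_abs_self l) (abs_nonneg _))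
    exact (mul_le_mul_of_nonneg_left hvb hs0).trans hva
  convert hyp v A hgreedy u B η' hω hη' using 2
  · exact eq_of_forall_coord_eq hbasis fun k => by
      rw [map_sub, coord_sum hbi, hcoord]
      by_cases hA : k ∈ A <;> by_cases hB : k ∈ B <;> simp [hbi, hA, hB, η']
  · simp [v]

theorem norm_sub_coordSum_union_add_smul_le (hyp : IsPCCGreedy e e' ω s D)
    (hnorm : ∀ n, ‖e n‖ = 1) (hbi : ∀ n m, e' n (e m) = if n = m then 1 else 0)
    (hbasis : ∀ x : X, Tendsto (fun N => ∑ n ∈ range N, e' n x • e n) atTop (𝓝 x))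
    (hs : 0 ≤ s) (x : X) (A B : Finset ℕ) (c : ℕ → ℝ) {l : ℝ} (hl : 1 ≤ l) :
    ‖x - ∑ n ∈ A ∪ B, e' n x • e n + l • ∑ n ∈ A \ B, e' n x • e n‖ ≤
      l * D * ‖x - ∑ n ∈ B, c n • e n‖ := by
  set p := x - ∑ n ∈ B, c n • e n
  have hp : ∀ k, e' k p = if k ∈ B then e' k x - c k else e' k x := fun k => by
    by_cases hB : k ∈ B <;> simp [p, hbi, hB]
  rw [show x - ∑ n ∈ A ∪ B, e' n x • e n + l • ∑ n ∈ A \ B, e' n x • e n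
      = p - ∑ n ∈ B, e' n p • e n + (l - 1) • ∑ n ∈ A \ B, e' n p • e n from
    eq_of_forall_coord_eq hbasis fun k => by
      simp only [map_add, map_sub, map_smul, coord_sum hbi, hp, smul_eq_mul]
      by_cases hA : k ∈ A <;> by_cases hB : k ∈ B <;> simp [hA, hB]
      ring]
  calc _ ≤ ‖p - ∑ n ∈ B, e' n p • e n‖ + (l - 1) * ‖∑ n ∈ A \ B, e' n p • e n‖ := by
        refine (norm_add_le _ _).trans_eq ?_
        rw [norm_smul, Real.norm_of_nonneg (by linarith)]
    _ ≤ D * ‖p‖ + (l - 1) * (D * ‖p‖) := by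
        exact add_le_add (hyp.norm_sub_coordSum_le hnorm hbi hbasis hs p B)
          (mul_le_mul_of_nonneg_left (hyp.norm_coordSum_le hnorm hbi hbasis hs p (A \ B))
            (by linarith))
    _ = l * D * ‖p‖ := by ring

theorem norm_sub_coordSum_greedy_le (hyp : IsPCCGreedy e e' ω s D) (hnorm : ∀ n, ‖e n‖ = 1)
    (hbi : ∀ n m, e' n (e m) = if n = m then 1 else 0)
    (hbasis : ∀ x : X, Tendsto (fun N => ∑ n ∈ range N, e' n x • e n) atTop (𝓝 x))
    (hs0 : 0 ≤ s) (hs1 : s ≤ 1) (hD : 0 ≤ D) {t : ℝ} (ht : 0 < t) {x : X} {A : Finset ℕ}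
    (hA : IsGreedySet e' t x A) {B : Finset ℕ} (hω : ∑ n ∈ B, ω n ≤ ∑ n ∈ A, ω n)
    (c : ℕ → ℝ) (l : ℝ) (hl1 : 1 ≤ l) (hl : s ≤ l * t) :
    ‖x - ∑ n ∈ A, e' n x • e n‖ ≤ l * D ^ 2 * ‖x - ∑ n ∈ B, c n • e n‖ := by
  obtain ⟨u, hu, hout, hin⟩ := hA.exists_threshold hnorm hbasis ht
  have hin' : ∀ a ∈ A, s * u ≤ l * |e' a x| := fun a ha =>
    calc s * u ≤ l * t * u := mul_le_mul_of_nonneg_right hl hu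
      _ = l * (t * u) := mul_assoc ..
      _ ≤ l * |e' a x| := mul_le_mul_of_nonneg_left (hin a ha) (by linarith)
  calc _ ≤ D * ‖x - ∑ n ∈ A ∪ B, e' n x • e n + l • ∑ n ∈ A \ B, e' n x • e n‖ :=
        hyp.norm_sub_coordSum_le_of_threshold hbi hbasis hs0 hs1 hω hu hout hin'
    _ ≤ D * (l * D * ‖x - ∑ n ∈ B, c n • e n‖) := by
        gcongr
        exact hyp.norm_sub_coordSum_union_add_smul_le hnorm hbi hbasis hs0 x A B c hl1
    _ = _ := by ring

end IsPCCGreedy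

end SchauderBasis

theorem stmt6_general {X : Type*} [NormedAddCommGroup X] [NormedSpace ℝ X]
    (e : ℕ → X) (e' : ℕ → X →L[ℝ] ℝ)
    (hnorm : ∀ n, ‖e n‖ = 1)
    (hbi : ∀ n m, e' n (e m) = if n = m then 1 else 0)
    (hbasis : ∀ x : X,
      Filter.Tendsto (fun N => ∑ n ∈ Finset.range N, e' n x • e n) Filter.atTop (nhds x))
    (ω : ℕ → ℝ)
    (s D : ℝ) (hs0 : 0 < s) (hs1 : s ≤ 1) (hD : 0 < D)
    -- `(s,ω)`-PCCG property with constant `D`: for every `s`-greedy set `A` of `x`,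
    -- the error is bounded by `D` times any competitor `α • 1_{ηB}` with `ω(B) ≤ ω(A)`
    (hyp : ∀ (x : X) (A : Finset ℕ),
      (∀ a ∈ A, ∀ b ∉ A, s * |e' b x| ≤ |e' a x|) →
      ∀ (α : ℝ) (B : Finset ℕ) (η : ℕ → ℝ),
        (∑ n ∈ B, ω n) ≤ (∑ n ∈ A, ω n) → (∀ n ∈ B, η n = 1 ∨ η n = -1) →
        ‖x - ∑ n ∈ A, e' n x • e n‖ ≤ D * ‖x - α • ∑ n ∈ B, η n • e n‖) :
    -- `(t,ω)`-greedy for every `0 < t ≤ 1`, with constant `D²` if `s ≤ t`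
    -- and `(2 + ((t+s)/t)·D)·D` if `t < s`
    ∀ t : ℝ, 0 < t → t ≤ 1 →
      ∀ (x : X) (A : Finset ℕ),
        (∀ a ∈ A, ∀ b ∉ A, t * |e' b x| ≤ |e' a x|) →
        ∀ (B : Finset ℕ) (c : ℕ → ℝ), (∑ n ∈ B, ω n) ≤ (∑ n ∈ A, ω n) →
          ‖x - ∑ n ∈ A, e' n x • e n‖ ≤
            (if s ≤ t then D ^ 2 else (2 + ((t + s) / t) * D) * D) *
              ‖x - ∑ n ∈ B, c n • e n‖ := by
  intro t ht _ x A hA B c hω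
  have hbound := IsPCCGreedy.norm_sub_coordSum_greedy_le hyp hnorm hbi hbasis hs0.le hs1 hD.le
    ht hA hω c
  split_ifs with hst
  · simpa only [one_mul] using hbound 1 le_rfl (by rwa [one_mul])
  · have hts : t < s := not_le.mp hst
    refine (hbound (s / t) ((one_le_div ht).mpr hts.le) (div_mul_cancel₀ s ht.ne').ge).trans
      (mul_le_mul_of_nonneg_right ?_ (norm_nonneg _))
    have : s / t * D ^ 2 ≤ (t + s) / t * D ^ 2 :=
      mul_le_mul_of_nonneg_right (div_le_div_of_nonneg_right (by linarith) ht.le) (sq_nonneg D)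
    nlinarith

theorem stmt6 {X : Type*} [NormedAddCommGroup X] [NormedSpace ℝ X] [CompleteSpace X]
    (e : ℕ → X) (e' : ℕ → X →L[ℝ] ℝ)
    (hnorm : ∀ n, ‖e n‖ = 1)
    (hbi : ∀ n m, e' n (e m) = if n = m then 1 else 0)
    (hbasis : ∀ x : X,
      Filter.Tendsto (fun N => ∑ n ∈ Finset.range N, e' n x • e n) Filter.atTop (nhds x))
    (ω : ℕ → ℝ) (hω : ∀ n, 0 < ω n)
    (s D : ℝ) (hs0 : 0 < s) (hs1 : s ≤ 1) (hD : 0 < D)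
    -- `(s,ω)`-PCCG property with constant `D`: for every `s`-greedy set `A` of `x`,
    -- the error is bounded by `D` times any competitor `α • 1_{ηB}` with `ω(B) ≤ ω(A)`
    (hyp : ∀ (x : X) (A : Finset ℕ),
      (∀ a ∈ A, ∀ b ∉ A, s * |e' b x| ≤ |e' a x|) →
      ∀ (α : ℝ) (B : Finset ℕ) (η : ℕ → ℝ),
        (∑ n ∈ B, ω n) ≤ (∑ n ∈ A, ω n) → (∀ n ∈ B, η n = 1 ∨ η n = -1) →
        ‖x - ∑ n ∈ A, e' n x • e n‖ ≤ D * ‖x - α • ∑ n ∈ B, η n • e n‖) :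
    -- `(t,ω)`-greedy for every `0 < t ≤ 1`, with constant `D²` if `s ≤ t`
    -- and `(2 + ((t+s)/t)·D)·D` if `t < s`
    ∀ t : ℝ, 0 < t → t ≤ 1 →
      ∀ (x : X) (A : Finset ℕ),
        (∀ a ∈ A, ∀ b ∉ A, t * |e' b x| ≤ |e' a x|) →
        ∀ (B : Finset ℕ) (c : ℕ → ℝ), (∑ n ∈ B, ω n) ≤ (∑ n ∈ A, ω n) →
          ‖x - ∑ n ∈ A, e' n x • e n‖ ≤
            (if s ≤ t then D ^ 2 else (2 + ((t + s) / t) * D) * D) *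
              ‖x - ∑ n ∈ B, c n • e n‖ :=
  stmt6_general e e' hnorm hbi hbasis ω s D hs0 hs1 hD hyp
end

section
/- Let ℬ be a normalized Schauder basis of X and ω a positive weight sequence, and suppose ℬ has the (s,ω)-PCCG property with constant D(s): ‖y − Gˢ(y)‖ ≤ D(s)·𝒟^ω_{ω(A)}(y) for every s-greedy set A of y with Gˢ(y) = P_A(y). Then the coordinate projections are uniformly bounded: ‖z − P_C(z)‖ ≤ D(s)·‖z‖ for every z ∈ X and every finite set C ⊂ ℕ, and consequently ‖P_C(z)‖ ≤ (1 + D(s))·‖z‖. -/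
/-!
Coefficients of a basis expansion tend to `0`, so for given `z` and finite `C` they are bounded by
some `M`. Adding `μ • 1_C` with `μ ≥ s M + M` lifts every coefficient on `C` above `s M`, making `C`
an `s`-greedy set of `y = z + μ • 1_C` with `y - P_C y = z - P_C z`. Comparing `y` with the
constant-sign vector `μ • 1_C`, supported on `C` itself, gives `𝒟 ≤ ‖y - μ • 1_C‖ = ‖z‖`.
-/

open Finset Filter Topology

lemma tendsto_zero_of_tendsto_sum_range {G : Type*} [AddCommGroup G] [TopologicalSpace G]
    [IsTopologicalAddGroup G] {f : ℕ → G} {x : G}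
    (h : Tendsto (fun N => ∑ n ∈ range N, f n) atTop (𝓝 x)) : Tendsto f atTop (𝓝 0) := by
  have hsucc := (h.comp (tendsto_add_atTop_nat 1)).sub h
  simpa only [Function.comp_def, sum_range_succ_sub_sum, sub_self] using hsucc

section Biorthogonal

variable {X : Type*} [NormedAddCommGroup X] [NormedSpace ℝ X] {e : ℕ → X} {e' : ℕ → X →L[ℝ] ℝ}

lemma exists_abs_coeff_le (hnorm : ∀ n, ‖e n‖ = 1) {x : X}
    (hx : Tendsto (fun N => ∑ n ∈ range N, e' n x • e n) atTop (𝓝 x)) :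
    ∃ M, ∀ n, |e' n x| ≤ M := by
  have hterm : Tendsto (fun n => |e' n x|) atTop (𝓝 0) := by
    have := (tendsto_zero_of_tendsto_sum_range hx).norm
    simpa only [norm_smul, hnorm, mul_one, Real.norm_eq_abs, norm_zero] using this
  obtain ⟨M, hM⟩ := hterm.bddAbove_range
  exact ⟨M, fun n => hM ⟨n, rfl⟩⟩

variable (hbi : ∀ n m, e' n (e m) = if n = m then 1 else 0)
include hbi

lemma coeff_add_smul_sum (z : X) (μ : ℝ) (C : Finset ℕ) (k : ℕ) :
    e' k (z + μ • ∑ n ∈ C, e n) = e' k z + if k ∈ C then μ else 0 := by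
  simp only [map_add, map_smul, map_sum, hbi, smul_eq_mul, sum_ite_eq, mul_ite, mul_one, mul_zero]

lemma sub_proj_add_smul_sum (z : X) (μ : ℝ) (C : Finset ℕ) :
    z + μ • ∑ n ∈ C, e n - ∑ n ∈ C, e' n (z + μ • ∑ n ∈ C, e n) • e n
      = z - ∑ n ∈ C, e' n z • e n := by
  have hproj : ∑ n ∈ C, e' n (z + μ • ∑ n ∈ C, e n) • e n
      = ∑ n ∈ C, e' n z • e n + μ • ∑ n ∈ C, e n := by
    rw [smul_sum, ← sum_add_distrib]
    refine sum_congr rfl fun n hn => ?_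
    rw [← smul_sum, coeff_add_smul_sum hbi, if_pos hn, add_smul]
  rw [hproj]
  abel

lemma isGreedy_add_smul_sum {s M μ : ℝ} (hs : 0 ≤ s) (hμ : s * M + M ≤ μ) {z : X}
    (hM : ∀ n, |e' n z| ≤ M) (C : Finset ℕ) :
    ∀ a ∈ C, ∀ b ∉ C,
      s * |e' b (z + μ • ∑ n ∈ C, e n)| ≤ |e' a (z + μ • ∑ n ∈ C, e n)| := by
  intro a ha b hb
  rw [coeff_add_smul_sum hbi, coeff_add_smul_sum hbi, if_pos ha, if_neg hb, add_zero]
  calc s * |e' b z| ≤ s * M := mul_le_mul_of_nonneg_left (hM b) hs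
    _ ≤ μ - |e' a z| := by linarith [hM a]
    _ ≤ |e' a z + μ| := by
      have := abs_sub_abs_le_abs_sub μ (-e' a z)
      rw [abs_neg, sub_neg_eq_add, add_comm] at this
      linarith [le_abs_self μ]

end Biorthogonal

theorem stmt10_general {X : Type*} [NormedAddCommGroup X] [NormedSpace ℝ X]
    (e : ℕ → X) (e' : ℕ → X →L[ℝ] ℝ)
    (hnorm : ∀ n, ‖e n‖ = 1)
    (hbi : ∀ n m, e' n (e m) = if n = m then 1 else 0)
    (hbasis : ∀ x : X,
      Filter.Tendsto (fun N => ∑ n ∈ Finset.range N, e' n x • e n) Filter.atTop (nhds x))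
    (ω : ℕ → ℝ)
    (s D : ℝ) (hs0 : 0 < s)
    -- `(s,ω)`-PCCG property with constant `D`
    (hyp : ∀ (y : X) (A : Finset ℕ),
      (∀ a ∈ A, ∀ b ∉ A, s * |e' b y| ≤ |e' a y|) →
      ∀ (α : ℝ) (B : Finset ℕ) (η : ℕ → ℝ),
        (∑ n ∈ B, ω n) ≤ (∑ n ∈ A, ω n) → (∀ n ∈ B, η n = 1 ∨ η n = -1) →
        ‖y - ∑ n ∈ A, e' n y • e n‖ ≤ D * ‖y - α • ∑ n ∈ B, η n • e n‖) :
    ∀ (z : X) (C : Finset ℕ),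
      ‖z - ∑ n ∈ C, e' n z • e n‖ ≤ D * ‖z‖ ∧
      ‖∑ n ∈ C, e' n z • e n‖ ≤ (1 + D) * ‖z‖ := by
  intro z C
  obtain ⟨M, hM⟩ := exists_abs_coeff_le hnorm (hbasis z)
  have hcompl := hyp _ C (isGreedy_add_smul_sum hbi hs0.le le_rfl hM C) (s * M + M) C (fun _ => 1)
    le_rfl fun _ _ => Or.inl rfl
  simp only [one_smul, add_sub_cancel_right, sub_proj_add_smul_sum hbi] at hcompl
  refine ⟨hcompl, ?_⟩
  calc ‖∑ n ∈ C, e' n z • e n‖ = ‖z - (z - ∑ n ∈ C, e' n z • e n)‖ := by rw [sub_sub_cancel]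
    _ ≤ ‖z‖ + ‖z - ∑ n ∈ C, e' n z • e n‖ := norm_sub_le _ _
    _ ≤ (1 + D) * ‖z‖ := by linarith

theorem stmt10 {X : Type*} [NormedAddCommGroup X] [NormedSpace ℝ X] [CompleteSpace X]
    (e : ℕ → X) (e' : ℕ → X →L[ℝ] ℝ)
    (hnorm : ∀ n, ‖e n‖ = 1)
    (hbi : ∀ n m, e' n (e m) = if n = m then 1 else 0)
    (hbasis : ∀ x : X,
      Filter.Tendsto (fun N => ∑ n ∈ Finset.range N, e' n x • e n) Filter.atTop (nhds x))
    (ω : ℕ → ℝ) (hω : ∀ n, 0 < ω n)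
    (s D : ℝ) (hs0 : 0 < s) (hs1 : s ≤ 1) (hD : 0 < D)
    -- `(s,ω)`-PCCG property with constant `D`
    (hyp : ∀ (y : X) (A : Finset ℕ),
      (∀ a ∈ A, ∀ b ∉ A, s * |e' b y| ≤ |e' a y|) →
      ∀ (α : ℝ) (B : Finset ℕ) (η : ℕ → ℝ),
        (∑ n ∈ B, ω n) ≤ (∑ n ∈ A, ω n) → (∀ n ∈ B, η n = 1 ∨ η n = -1) →
        ‖y - ∑ n ∈ A, e' n y • e n‖ ≤ D * ‖y - α • ∑ n ∈ B, η n • e n‖) :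
    ∀ (z : X) (C : Finset ℕ),
      ‖z - ∑ n ∈ C, e' n z • e n‖ ≤ D * ‖z‖ ∧
      ‖∑ n ∈ C, e' n z • e n‖ ≤ (1 + D) * ‖z‖ :=
  stmt10_general e e' hnorm hbi hbasis ω s D hs0 hyp
end
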